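/- arXiv:2603.22265 — 3 statements merged into one kernel-verified Lean document; each statement's English description precedes it below -/
import Mathlib

section
/- Let p ∈ (1,+∞) and let W satisfy assumptions (A1)–(A4). Then the reduced density W₀(F) := inf_{ξ∈ℝ³} W((F|ξ)) is continuous as a map from M^{3×2} into the extended interval [0,+∞], and it satisfies the coercivity bound W₀(F) ≥ C₁|F|^p − C₁⁻¹ for every F ∈ M^{3×2}, with the same constant C₁ as in (A3). -/
open scoped ENNReal

noncomputable section

/-- Frobenius norm of a real matrix. -/
def frob {m n : ℕ} (A : Matrix (Fin m) (Fin n) ℝ) : ℝ :=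
  Real.sqrt (∑ i, ∑ j, (A i j) ^ 2)

/-- The 3×3 matrix `(F | ξ)` whose first two columns are the columns of `F : M^{3×2}`
and whose third column is `ξ ∈ ℝ³`. -/
def withCol (F : Matrix (Fin 3) (Fin 2) ℝ) (ξ : Fin 3 → ℝ) : Matrix (Fin 3) (Fin 3) ℝ :=
  Matrix.of fun i j => if h : (j : ℕ) < 2 then F i ⟨j, h⟩ else ξ i

/-- The reduced density `W₀(F) = inf_{ξ ∈ ℝ³} W((F|ξ))`. -/
def W₀ (W : Matrix (Fin 3) (Fin 3) ℝ → ℝ≥0∞) (F : Matrix (Fin 3) (Fin 2) ℝ) : ℝ≥0∞ :=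
  ⨅ ξ : Fin 3 → ℝ, W (withCol F ξ)

open Filter Topology

lemma sum_sq_withCol (F : Matrix (Fin 3) (Fin 2) ℝ) (ξ : Fin 3 → ℝ) :
    ∑ i, ∑ j, (withCol F ξ i j) ^ 2 = (∑ i, ∑ j, (F i j) ^ 2) + ∑ i, (ξ i) ^ 2 := by
  simp [withCol, Fin.sum_univ_three, Fin.sum_univ_two]
  ring

lemma frob_nonneg {m n : ℕ} (A : Matrix (Fin m) (Fin n) ℝ) : 0 ≤ frob A :=
  Real.sqrt_nonneg _

lemma frob_le_frob_withCol (F : Matrix (Fin 3) (Fin 2) ℝ) (ξ : Fin 3 → ℝ) :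
    frob F ≤ frob (withCol F ξ) := by
  unfold frob
  apply Real.sqrt_le_sqrt
  rw [sum_sq_withCol]
  have : (0:ℝ) ≤ ∑ i, (ξ i)^2 := Finset.sum_nonneg fun i _ => sq_nonneg _
  linarith

lemma abs_xi_le (F : Matrix (Fin 3) (Fin 2) ℝ) (ξ : Fin 3 → ℝ) (i : Fin 3) :
    |ξ i| ≤ frob (withCol F ξ) := by
  unfold frob
  apply Real.abs_le_sqrt
  rw [sum_sq_withCol]
  have h1 : (0:ℝ) ≤ ∑ i, ∑ j, (F i j)^2 :=
    Finset.sum_nonneg fun i _ => Finset.sum_nonneg fun j _ => sq_nonneg _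
  have h2 : (ξ i)^2 ≤ ∑ i, (ξ i)^2 :=
    Finset.single_le_sum (f := fun i => (ξ i)^2) (fun i _ => sq_nonneg _) (Finset.mem_univ i)
  linarith

lemma continuous_withCol : Continuous
    (fun q : Matrix (Fin 3) (Fin 2) ℝ × (Fin 3 → ℝ) => withCol q.1 q.2) := by
  apply continuous_matrix
  intro i j
  by_cases h : (j:ℕ) < 2 <;> simp only [withCol, Matrix.of_apply, h, dif_pos, dif_neg,
    not_false_iff] <;> fun_prop

/-- under (A1)–(A4), the reduced density `W₀` is continuous as an
`[0,+∞]`-valued function and satisfies the coercivity bound of (A3) with the same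
constant `C₁`. -/
theorem stmt0 (p : ℝ) (hp : 1 < p) (W : Matrix (Fin 3) (Fin 3) ℝ → ℝ≥0∞)
    (C₁ : ℝ) (hC₁ : 0 < C₁)
    (hA1 : Continuous W)
    (hA2 : ∀ F : Matrix (Fin 3) (Fin 3) ℝ, (0 < F.det → W F ≠ ⊤) ∧ (F.det ≤ 0 → W F = ⊤))
    (hA3 : ∀ F : Matrix (Fin 3) (Fin 3) ℝ, ENNReal.ofReal (C₁ * frob F ^ p - C₁⁻¹) ≤ W F)
    (hA4 : ∀ δ : ℝ, 0 < δ → ∃ c : ℝ, 0 < c ∧ ∀ F : Matrix (Fin 3) (Fin 3) ℝ,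
      δ ≤ F.det → W F ≤ ENNReal.ofReal (c * (1 + frob F ^ p))) :
    Continuous (W₀ W) ∧
      ∀ F : Matrix (Fin 3) (Fin 2) ℝ,
        ENNReal.ofReal (C₁ * frob F ^ p - C₁⁻¹) ≤ W₀ W F := by
  have hp0 : 0 < p := lt_trans one_pos hp
  -- coercivity
  have coer : ∀ F : Matrix (Fin 3) (Fin 2) ℝ,
      ENNReal.ofReal (C₁ * frob F ^ p - C₁⁻¹) ≤ W₀ W F := by
    intro F
    refine le_iInf fun ξ => le_trans ?_ (hA3 (withCol F ξ))
    apply ENNReal.ofReal_le_ofReal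
    have h1 : frob F ^ p ≤ frob (withCol F ξ) ^ p :=
      Real.rpow_le_rpow (frob_nonneg F) (frob_le_frob_withCol F ξ) hp0.le
    nlinarith [mul_le_mul_of_nonneg_left h1 hC₁.le]
  refine ⟨?_, coer⟩
  rw [continuous_iff_continuousAt]
  intro F
  rw [ContinuousAt, tendsto_order]
  constructor
  · -- lower semicontinuity at F
    intro b hb
    by_contra hcon
    have hfreq : ∃ᶠ G in 𝓝 F, W₀ W G ≤ b := by
      simpa only [not_eventually, not_lt] using hcon
    have hmem : F ∈ closure {G | W₀ W G ≤ b} := mem_closure_iff_frequently.2 hfreq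
    haveI : FrechetUrysohnSpace (Matrix (Fin 3) (Fin 2) ℝ) :=
      show FrechetUrysohnSpace (Fin 3 → Fin 2 → ℝ) from inferInstance
    obtain ⟨G, hGmem, hGtend⟩ := mem_closure_iff_seq_limit.1 hmem
    obtain ⟨b', hbb', hb'⟩ := exists_between hb
    have hb'top : b' ≠ ⊤ := hb'.ne_top
    have hξ : ∀ n, ∃ ξ : Fin 3 → ℝ, W (withCol (G n) ξ) < b' := by
      intro n
      have : W₀ W (G n) < b' := lt_of_le_of_lt (hGmem n) hbb'
      exact iInf_lt_iff.1 this
    choose ξ hξlt using hξ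
    -- uniform bound on frob (withCol (G n) (ξ n))
    set K : ℝ := (b'.toReal + C₁⁻¹) / C₁ with hK
    set R : ℝ := K ^ p⁻¹ with hR
    have hRnn : 0 ≤ R := Real.rpow_nonneg (by positivity) _
    have hfrobK : ∀ n, frob (withCol (G n) (ξ n)) ≤ R := by
      intro n
      have h1 : ENNReal.ofReal (C₁ * frob (withCol (G n) (ξ n)) ^ p - C₁⁻¹) ≤ b' :=
        le_of_lt (lt_of_le_of_lt (hA3 _) (hξlt n))
      have h2 : C₁ * frob (withCol (G n) (ξ n)) ^ p - C₁⁻¹ ≤ b'.toReal :=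
        (ENNReal.ofReal_le_iff_le_toReal hb'top).1 h1
      have h3 : frob (withCol (G n) (ξ n)) ^ p ≤ K := by
        rw [hK, le_div_iff₀ hC₁]
        nlinarith
      calc frob (withCol (G n) (ξ n))
          = (frob (withCol (G n) (ξ n)) ^ p) ^ p⁻¹ := by
            rw [← Real.rpow_mul (frob_nonneg _), mul_inv_cancel₀ hp0.ne', Real.rpow_one]
        _ ≤ R := Real.rpow_le_rpow (Real.rpow_nonneg (frob_nonneg _) _) h3 (by positivity)
    have hξball : ∀ n, ξ n ∈ Metric.closedBall (0 : Fin 3 → ℝ) R := by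
      intro n
      rw [Metric.mem_closedBall, dist_zero_right]
      rw [pi_norm_le_iff_of_nonneg hRnn]
      intro i
      rw [Real.norm_eq_abs]
      exact le_trans (abs_xi_le _ _ i) (hfrobK n)
    obtain ⟨a, -, φ, hφ, hξtend⟩ :=
      (isCompact_closedBall (0 : Fin 3 → ℝ) R).tendsto_subseq hξball
    have hpair : Tendsto (fun n => withCol (G (φ n)) (ξ (φ n))) atTop (𝓝 (withCol F a)) := by
      have : Tendsto (fun n => ((G (φ n), ξ (φ n)) :
          Matrix (Fin 3) (Fin 2) ℝ × (Fin 3 → ℝ))) atTop (𝓝 (F, a)) :=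
        (hGtend.comp hφ.tendsto_atTop).prodMk_nhds hξtend
      exact (continuous_withCol.tendsto (F, a)).comp this
    have hWtend : Tendsto (fun n => W (withCol (G (φ n)) (ξ (φ n)))) atTop
        (𝓝 (W (withCol F a))) := (hA1.tendsto _).comp hpair
    have hWle : W (withCol F a) ≤ b' :=
      le_of_tendsto hWtend (Filter.Eventually.of_forall fun n => (hξlt (φ n)).le)
    have : W₀ W F ≤ b' := le_trans (iInf_le _ a) hWle
    exact absurd (lt_of_le_of_lt this hb') (lt_irrefl _)
  · -- upper semicontinuity at F
    intro b hb
    obtain ⟨ξ, hξ⟩ := iInf_lt_iff.1 hb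
    have hopen : IsOpen {G : Matrix (Fin 3) (Fin 2) ℝ | W (withCol G ξ) < b} := by
      have hc : Continuous fun G : Matrix (Fin 3) (Fin 2) ℝ => W (withCol G ξ) := by
        exact hA1.comp (continuous_withCol.comp (continuous_id.prodMk continuous_const))
      exact isOpen_Iio.preimage hc
    filter_upwards [hopen.mem_nhds hξ] with G hG
    exact lt_of_le_of_lt (iInf_le _ ξ) hG
end
end

section
/- Let p ∈ (1,+∞) and let W satisfy assumptions (A1)–(A4). Then for every δ > 0 there exists a constant c_δ > 0 such that W₀(F) ≤ c_δ(1+|F|^p) for every F ∈ M^{3×2} with |F¹∧F²| ≥ δ. -/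
open scoped ENNReal

noncomputable section

/-- Euclidean norm on ℝ³ (viewed as `Fin 3 → ℝ`). -/
def enorm3 (v : Fin 3 → ℝ) : ℝ := Real.sqrt (∑ i, (v i) ^ 2)

/-- Cross product `F¹ ∧ F²` of the two columns of `F ∈ M^{3×2}`. -/
def colCross (F : Matrix (Fin 3) (Fin 2) ℝ) : Fin 3 → ℝ :=
  crossProduct (fun i => F i 0) (fun i => F i 1)

/-- under (A1)–(A4), for every `δ > 0` there is `c_δ > 0` such that
`W₀(F) ≤ c_δ (1 + |F|^p)` whenever `|F¹ ∧ F²| ≥ δ`. -/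
theorem stmt2 (p : ℝ) (hp : 1 < p) (W : Matrix (Fin 3) (Fin 3) ℝ → ℝ≥0∞)
    (C₁ : ℝ) (hC₁ : 0 < C₁)
    (hA1 : Continuous W)
    (hA2 : ∀ F : Matrix (Fin 3) (Fin 3) ℝ, (0 < F.det → W F ≠ ⊤) ∧ (F.det ≤ 0 → W F = ⊤))
    (hA3 : ∀ F : Matrix (Fin 3) (Fin 3) ℝ, ENNReal.ofReal (C₁ * frob F ^ p - C₁⁻¹) ≤ W F)
    (hA4 : ∀ δ : ℝ, 0 < δ → ∃ c : ℝ, 0 < c ∧ ∀ F : Matrix (Fin 3) (Fin 3) ℝ,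
      δ ≤ F.det → W F ≤ ENNReal.ofReal (c * (1 + frob F ^ p))) :
    ∀ δ : ℝ, 0 < δ → ∃ c : ℝ, 0 < c ∧ ∀ F : Matrix (Fin 3) (Fin 2) ℝ,
      δ ≤ enorm3 (colCross F) → W₀ W F ≤ ENNReal.ofReal (c * (1 + frob F ^ p)) := by
  intro δ hδ
  obtain ⟨c, hc, hbound⟩ := hA4 δ hδ
  have hp0 : 0 < p := lt_trans one_pos hp
  have h2p : (0:ℝ) < (2:ℝ) ^ p := Real.rpow_pos_of_pos two_pos p
  refine ⟨c * (1 + 2 ^ p), by positivity, ?_⟩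
  intro F hF
  set n := enorm3 (colCross F) with hn
  have hn0 : 0 < n := lt_of_lt_of_le hδ hF
  set ξ : Fin 3 → ℝ := fun i => colCross F i / n with hξ
  have hsq : ∑ i, (colCross F i)^2 = n^2 := by
    rw [hn]; unfold enorm3; rw [Real.sq_sqrt (by positivity)]
  have hsq3 : (colCross F 0)^2 + (colCross F 1)^2 + (colCross F 2)^2 = n^2 := by
    rw [← hsq, Fin.sum_univ_three]
  have hdet : (withCol F ξ).det = n := by
    have h1 : (withCol F ξ).det
        = ξ 0 * colCross F 0 + ξ 1 * colCross F 1 + ξ 2 * colCross F 2 := by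
      simp [withCol, Matrix.det_fin_three, colCross, crossProduct]
      ring
    rw [h1, hξ]
    field_simp
    linarith [hsq3]
  have hunit : ∑ i, (ξ i)^2 = 1 := by
    rw [hξ]
    simp only [div_pow]
    rw [← Finset.sum_div, hsq, div_self (by positivity)]
  have hfrobsq : (frob (withCol F ξ))^2 = (frob F)^2 + 1 := by
    unfold frob withCol
    rw [Real.sq_sqrt (by positivity), Real.sq_sqrt (by positivity)]
    rw [Fin.sum_univ_three] at hunit ⊢
    simp only [Fin.sum_univ_three, Fin.sum_univ_two]
    simp only [Matrix.of_apply]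
    norm_num
    linarith [hunit]
  have hfle : frob (withCol F ξ) ≤ frob F + 1 := by
    have h0 : 0 ≤ frob F := Real.sqrt_nonneg _
    have h1 : 0 ≤ frob (withCol F ξ) := Real.sqrt_nonneg _
    nlinarith [hfrobsq]
  -- rpow bound
  have hfF : 0 ≤ frob F := Real.sqrt_nonneg _
  have hrpow : frob (withCol F ξ) ^ p ≤ 2 ^ p * (frob F ^ p + 1) := by
    calc frob (withCol F ξ) ^ p ≤ (frob F + 1) ^ p :=
          Real.rpow_le_rpow (Real.sqrt_nonneg _) hfle (le_of_lt hp0)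
      _ ≤ (2 * max (frob F) 1) ^ p := by
          apply Real.rpow_le_rpow (by positivity) _ (le_of_lt hp0)
          rcases le_total (frob F) 1 with h | h
          · rw [max_eq_right h]; linarith
          · rw [max_eq_left h]; linarith
      _ = 2 ^ p * (max (frob F) 1) ^ p := Real.mul_rpow (by norm_num) (by positivity)
      _ ≤ 2 ^ p * (frob F ^ p + 1) := by
          apply mul_le_mul_of_nonneg_left _ (le_of_lt h2p)
          rcases le_total (frob F) 1 with h | h
          · rw [max_eq_right h, Real.one_rpow]
            have := Real.rpow_nonneg hfF p
            linarith
          · rw [max_eq_left h]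
            linarith [Real.one_rpow p ▸ (le_refl (1:ℝ))]
  have step1 : W₀ W F ≤ W (withCol F ξ) := iInf_le _ ξ
  have step2 : W (withCol F ξ) ≤ ENNReal.ofReal (c * (1 + frob (withCol F ξ) ^ p)) :=
    hbound _ (by rw [hdet]; exact hF)
  refine le_trans (le_trans step1 step2) (ENNReal.ofReal_le_ofReal ?_)
  have hfwp : 0 ≤ frob F ^ p := Real.rpow_nonneg hfF p
  nlinarith [hrpow]
end
end

section
/- Let p ∈ (1,+∞) and let W₀ : M^{3×2} → [0,+∞] satisfy the stated hypotheses. Define the sequence R_i W₀ by R₀W₀ := W₀ and, for every i ≥ 0 and F ∈ M^{3×2}, R_{i+1}W₀(F) := inf{ (1−λ) R_iW₀(F + λ b⊗a) + λ R_iW₀(F − (1−λ) b⊗a) : a ∈ ℝ², b ∈ ℝ³, λ ∈ [0,1] }, where b⊗a ∈ M^{3×2} has entries (b⊗a)_{ij} = b_i a_j. Then: R_iW₀ is upper semicontinuous for every i ≥ 0; R_iW₀ is finite-valued for every i ≥ 2; R_{i+1}W₀ ≤ R_iW₀ pointwise for every i ≥ 0; and the rank-one convex envelope satisfies RW₀(F)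 = inf_{i ≥ 0} R_iW₀(F) for every F ∈ M^{3×2}. -/
open scoped ENNReal
open MeasureTheory

noncomputable section

/-- Rank-one convexity of an `[0,+∞]`-valued function on `M^{3×2}`. -/
def RankOneConvex (g : Matrix (Fin 3) (Fin 2) ℝ → ℝ≥0∞) : Prop :=
  ∀ l : ℝ, l ∈ Set.Ioo (0 : ℝ) 1 → ∀ A B : Matrix (Fin 3) (Fin 2) ℝ, (A - B).rank = 1 →
    g (l • A + (1 - l) • B) ≤ ENNReal.ofReal l * g A + ENNReal.ofReal (1 - l) * g B

/-- Rank-one convex envelope: the pointwise supremum of all rank-one convex functions below `f`. -/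
def rcEnv (f : Matrix (Fin 3) (Fin 2) ℝ → ℝ≥0∞) (F : Matrix (Fin 3) (Fin 2) ℝ) : ℝ≥0∞ :=
  ⨆ (g : Matrix (Fin 3) (Fin 2) ℝ → ℝ≥0∞) (_ : RankOneConvex g ∧ ∀ G, g G ≤ f G), g F

/-- Gradient matrix of a map `φ : ℝ² → ℝ³`. -/
def gradM (φ : EuclideanSpace ℝ (Fin 2) → EuclideanSpace ℝ (Fin 3))
    (x : EuclideanSpace ℝ (Fin 2)) : Matrix (Fin 3) (Fin 2) ℝ :=
  Matrix.of fun i j => fderiv ℝ φ x (EuclideanSpace.single j 1) i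

/-- Quasiconvex envelope: `Qf(ξ) = inf { ⨍_{B₁} f(ξ + ∇φ) : φ Lipschitz, φ = 0 outside B₁ }`. -/
def qcEnv (f : Matrix (Fin 3) (Fin 2) ℝ → ℝ≥0∞) (ξ : Matrix (Fin 3) (Fin 2) ℝ) : ℝ≥0∞ :=
  ⨅ (φ : EuclideanSpace ℝ (Fin 2) → EuclideanSpace ℝ (Fin 3))
    (_ : (∃ K, LipschitzWith K φ) ∧
      ∀ x ∉ Metric.ball (0 : EuclideanSpace ℝ (Fin 2)) 1, φ x = 0),
    (∫⁻ x in Metric.ball (0 : EuclideanSpace ℝ (Fin 2)) 1, f (ξ + gradM φ x)) /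
      volume (Metric.ball (0 : EuclideanSpace ℝ (Fin 2)) 1)

/-- The Kohn–Strang iteration: `R₀W₀ = W₀` and
`R_{i+1}W₀(F) = inf { (1−λ) R_iW₀(F + λ b⊗a) + λ R_iW₀(F − (1−λ) b⊗a) }`,
the infimum being over `a ∈ ℝ²`, `b ∈ ℝ³`, `λ ∈ [0,1]`. -/
def Riter (f : Matrix (Fin 3) (Fin 2) ℝ → ℝ≥0∞) : ℕ → Matrix (Fin 3) (Fin 2) ℝ → ℝ≥0∞
  | 0 => f
  | (i + 1) => fun F =>
      ⨅ (a : Fin 2 → ℝ) (b : Fin 3 → ℝ) (l : ℝ) (_ : l ∈ Set.Icc (0 : ℝ) 1),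
        ENNReal.ofReal (1 - l) * Riter f i (F + l • Matrix.vecMulVec b a) +
          ENNReal.ofReal l * Riter f i (F - (1 - l) • Matrix.vecMulVec b a)

/-!
Upper semicontinuity and monotonicity come straight from the definition: `R_{i+1}W₀` is an
infimum of averages of translates of `R_iW₀`, and the segment with `λ = 0` gives back `R_iW₀`.

Finiteness: along the rank-one line `F + t b⊗a` with `a = (x₂, -x₁)` the cross product
`F¹ ∧ F²` is affine in `t`, with slope `b ∧ Fx`. For `F ≠ 0` pick `x` with `Fx ≠ 0`, then `b`
with `b ∧ Fx ≠ 0`, then `t` so that neither `F + t b⊗a` nor `F - t b⊗a` is degenerate; `W₀` is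
finite at both, so `R₁W₀(F) < ∞`, and `R₂W₀(0) < ∞` by splitting `0` into `±b⊗a ≠ 0`.

Envelope: any rank-one convex `g ≤ W₀` lies below every `R_iW₀` by induction. Conversely
`inf_i R_iW₀` is rank-one convex, because `R_{i+1}W₀` at a convex combination of rank-one
connected matrices is below the average of `R_iW₀` at the endpoints, and since the sequence
decreases, the infimum of these averages is the average of the infima.
-/

open Matrix

local notation "𝕄" => Matrix (Fin 3) (Fin 2) ℝ

namespace Matrix

variable {K m n : Type*} [Field K] [Fintype n] [DecidableEq n]

theorem rank_ne_zero_of_ne_zero {A : Matrix m n K} (hA : A ≠ 0) : A.rank ≠ 0 := by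
  rw [rank, Ne, Submodule.finrank_eq_zero, LinearMap.range_eq_bot]
  intro h
  apply hA
  ext i j
  simpa using congrFun (LinearMap.congr_fun h (Pi.single j 1)) i

theorem rank_vecMulVec_eq_one {w : m → K} {v : n → K} (h : vecMulVec w v ≠ 0) :
    (vecMulVec w v).rank = 1 :=
  le_antisymm (rank_vecMulVec_le w v) (Nat.one_le_iff_ne_zero.2 (rank_ne_zero_of_ne_zero h))

theorem exists_eq_vecMulVec_of_rank_eq_one {A : Matrix m n K} (h : A.rank = 1) :
    ∃ (w : m → K) (v : n → K), A = vecMulVec w v := by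
  obtain ⟨w, -, hw⟩ := finrank_eq_one_iff'.mp h
  choose v hv using fun j : n =>
    hw ⟨A *ᵥ Pi.single j 1, LinearMap.mem_range.mpr ⟨Pi.single j 1, rfl⟩⟩
  refine ⟨w, v, ?_⟩
  ext i j
  have := congrFun (congrArg Subtype.val (hv j)) i
  simp only [SetLike.val_smul, Pi.smul_apply, smul_eq_mul, mulVec_single_one] at this
  rw [vecMulVec_apply, mul_comm, this]
  rfl

end Matrix

theorem exists_cross_ne_zero {R : Type*} [CommRing R] {u : Fin 3 → R} (hu : u ≠ 0) :
    ∃ b, crossProduct b u ≠ 0 := by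
  by_contra! h
  have h₀ := congrFun (h ![1, 0, 0])
  have h₁ := congrFun (h ![0, 1, 0])
  simp only [cross_apply] at h₀ h₁
  apply hu
  ext k
  fin_cases k
  · simpa using h₁ 2
  · simpa using h₀ 2
  · simpa using h₀ 1

theorem exists_add_smul_ne_zero_and_sub_smul_ne_zero {K V : Type*} [Field K] [Infinite K]
    [AddCommGroup V] [Module K V] (v : V) {w : V} (hw : w ≠ 0) :
    ∃ t : K, v + t • w ≠ 0 ∧ v - t • w ≠ 0 := by
  have hsub (s : V → V) (hs : Function.Injective s) :
      {t : K | s (t • w) = 0}.Subsingleton := fun t ht t' ht' =>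
    smul_left_injective K hw (hs (ht.trans ht'.symm))
  obtain ⟨t, ht⟩ := ((hsub (v + ·) (add_right_injective v)).finite.union
    (hsub (v - ·) sub_right_injective).finite).exists_notMem
  simp only [Set.mem_union, Set.mem_ofPred_eq, not_or] at ht
  exact ⟨t, ht⟩

theorem colCross_add_smul_vecMulVec (F : 𝕄) (b : Fin 3 → ℝ) (x : Fin 2 → ℝ) (t : ℝ) :
    colCross (F + t • vecMulVec b ![x 1, -x 0]) =
      colCross F + t • crossProduct b (F *ᵥ x) := by
  ext k
  fin_cases k <;>
  · simp only [colCross, cross_apply, mulVec, dotProduct, Fin.sum_univ_two, vecMulVec_cons,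
      smul_cons, smul_eq_mul, mul_neg, smul_empty, smul_of, Matrix.add_apply, of_apply,
      Pi.smul_apply, Pi.add_apply, cons_val_zero, cons_val_one, cons_val_fin_one, Fin.zero_eta,
      Fin.mk_one, Fin.reduceFinMk, cons_val, Fin.isValue]
    ring

theorem exists_colCross_add_sub_ne_zero {F : 𝕄} (hF : F ≠ 0) :
    ∃ (a : Fin 2 → ℝ) (b : Fin 3 → ℝ) (t : ℝ),
      colCross (F + t • vecMulVec b a) ≠ 0 ∧
        colCross (F - t • vecMulVec b a) ≠ 0 := by
  obtain ⟨x, hx⟩ : ∃ x, F *ᵥ x ≠ 0 := by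
    by_contra! h
    exact hF (Matrix.ext_of_mulVec_single fun j => (h _).trans (zero_mulVec _).symm)
  obtain ⟨b, hb⟩ := exists_cross_ne_zero hx
  obtain ⟨t, h₁, h₂⟩ := exists_add_smul_ne_zero_and_sub_smul_ne_zero (K := ℝ) (colCross F) hb
  refine ⟨![x 1, -x 0], b, t, ?_, ?_⟩
  · rwa [colCross_add_smul_vecMulVec]
  · rwa [sub_eq_add_neg, ← neg_smul, colCross_add_smul_vecMulVec, neg_smul, ← sub_eq_add_neg]

def laminateAvg (g : 𝕄 → ℝ≥0∞) (a : Fin 2 → ℝ) (b : Fin 3 → ℝ) (l : ℝ) (F : 𝕄) : ℝ≥0∞ :=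
  ENNReal.ofReal (1 - l) * g (F + l • vecMulVec b a) +
    ENNReal.ofReal l * g (F - (1 - l) • vecMulVec b a)

section laminateAvg

variable (g : 𝕄 → ℝ≥0∞) (a : Fin 2 → ℝ) (b : Fin 3 → ℝ) (F : 𝕄)

@[simp]
theorem laminateAvg_zero : laminateAvg g a b 0 F = g F := by
  simp [laminateAvg]

@[simp]
theorem laminateAvg_one : laminateAvg g a b 1 F = g F := by
  simp [laminateAvg]

theorem laminateAvg_of_vecMulVec_eq_zero (h : vecMulVec b a = 0) {l : ℝ} (hl : l ∈ Set.Icc 0 1) :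
    laminateAvg g a b l F = g F := by
  rw [laminateAvg, h, smul_zero, smul_zero, add_zero, sub_zero, ← add_mul,
    ← ENNReal.ofReal_add (by linarith [hl.2]) hl.1, sub_add_cancel, ENNReal.ofReal_one, one_mul]

theorem laminateAvg_half_smul (t : ℝ) :
    laminateAvg g ((2 * t) • a) b 2⁻¹ F =
      ENNReal.ofReal 2⁻¹ * g (F + t • vecMulVec b a) +
        ENNReal.ofReal 2⁻¹ * g (F - t • vecMulVec b a) := by
  have h₁ : (2⁻¹ : ℝ) • vecMulVec b ((2 * t) • a) = t • vecMulVec b a := by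
    rw [vecMulVec_smul, smul_smul, inv_mul_cancel_left₀ two_ne_zero]
  rw [laminateAvg, show (1 : ℝ) - 2⁻¹ = 2⁻¹ by norm_num, h₁]

variable {g}

theorem UpperSemicontinuous.laminateAvg (hg : UpperSemicontinuous g) (l : ℝ) :
    UpperSemicontinuous (laminateAvg g a b l) := by
  have const_mul (c : ℝ) {h : 𝕄 → ℝ≥0∞} (hh : UpperSemicontinuous h) :
      UpperSemicontinuous fun F => ENNReal.ofReal c * h F :=
    (ENNReal.continuous_const_mul ENNReal.ofReal_ne_top).comp_upperSemicontinuous hh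
      fun _ _ h => mul_le_mul_right h _
  exact (const_mul _ (hg.comp (continuous_add_const _))).add
    (const_mul _ (hg.comp (continuous_id.sub continuous_const)))

theorem RankOneConvex.le_laminateAvg (hg : RankOneConvex g) {l : ℝ} (hl : l ∈ Set.Icc 0 1) :
    g F ≤ laminateAvg g a b l F := by
  by_cases hM : vecMulVec b a = 0
  · exact (laminateAvg_of_vecMulVec_eq_zero g a b F hM hl).ge
  rcases hl.1.eq_or_lt with rfl | hl₀
  · simp
  rcases hl.2.eq_or_lt with rfl | hl₁
  · simp
  have hrank : ((F + l • vecMulVec b a) - (F - (1 - l) • vecMulVec b a)).rank = 1 := by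
    rw [show (F + l • vecMulVec b a) - (F - (1 - l) • vecMulVec b a) = vecMulVec b a by module]
    exact rank_vecMulVec_eq_one hM
  have hF : (1 - l) • (F + l • vecMulVec b a) + (1 - (1 - l)) • (F - (1 - l) • vecMulVec b a)
      = F := by module
  have := hg (1 - l) ⟨by linarith, by linarith⟩ _ _ hrank
  rwa [hF, sub_sub_cancel] at this

end laminateAvg

section Riter

variable (f : 𝕄 → ℝ≥0∞)

theorem Riter_succ_eq (i : ℕ) (F : 𝕄) :
    Riter f (i + 1) F = ⨅ (a) (b) (l : ℝ) (_ : l ∈ Set.Icc 0 1), laminateAvg (Riter f i) a b l F :=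
  rfl

theorem Riter_succ_le_laminateAvg {i : ℕ} {F : 𝕄} (a : Fin 2 → ℝ) (b : Fin 3 → ℝ) {l : ℝ}
    (hl : l ∈ Set.Icc 0 1) : Riter f (i + 1) F ≤ laminateAvg (Riter f i) a b l F := by
  rw [Riter_succ_eq]
  exact iInf₂_le_of_le a b (iInf₂_le l hl)

theorem Riter_succ_le (i : ℕ) (F : 𝕄) : Riter f (i + 1) F ≤ Riter f i F :=
  (Riter_succ_le_laminateAvg f 0 0 ⟨le_rfl, zero_le_one⟩).trans_eq (laminateAvg_zero _ _ _ _)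

theorem Riter_antitone (F : 𝕄) : Antitone fun i => Riter f i F :=
  antitone_nat_of_succ_le fun i => Riter_succ_le f i F

variable {f}

theorem Riter_upperSemicontinuous (hf : UpperSemicontinuous f) (i : ℕ) :
    UpperSemicontinuous (Riter f i) := by
  induction i with
  | zero => exact hf
  | succ i ih =>
    exact upperSemicontinuous_iInf fun a => upperSemicontinuous_iInf fun b =>
      upperSemicontinuous_biInf fun l _ => ih.laminateAvg a b l

theorem Riter_succ_ne_top {i : ℕ} {F : 𝕄} {a : Fin 2 → ℝ} {b : Fin 3 → ℝ} {t : ℝ}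
    (h₁ : Riter f i (F + t • vecMulVec b a) ≠ ⊤) (h₂ : Riter f i (F - t • vecMulVec b a) ≠ ⊤) :
    Riter f (i + 1) F ≠ ⊤ := by
  refine ne_top_of_le_ne_top ?_ (Riter_succ_le_laminateAvg f ((2 * t) • a) b (l := 2⁻¹)
    ⟨by norm_num, by norm_num⟩)
  rw [laminateAvg_half_smul]
  exact ENNReal.add_ne_top.2 ⟨ENNReal.mul_ne_top ENNReal.ofReal_ne_top h₁,
    ENNReal.mul_ne_top ENNReal.ofReal_ne_top h₂⟩

theorem Riter_one_ne_top (hfin : ∀ F, colCross F ≠ 0 → f F ≠ ⊤) {F : 𝕄} (hF : F ≠ 0) :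
    Riter f 1 F ≠ ⊤ := by
  obtain ⟨a, b, t, h₁, h₂⟩ := exists_colCross_add_sub_ne_zero hF
  exact Riter_succ_ne_top (hfin _ h₁) (hfin _ h₂)

theorem Riter_two_ne_top (hfin : ∀ F, colCross F ≠ 0 → f F ≠ ⊤) (F : 𝕄) : Riter f 2 F ≠ ⊤ := by
  by_cases hF : F = 0
  · have hM : vecMulVec ![1, 0, 0] ![1, 0] ≠ (0 : 𝕄) := fun h => by
      simpa [vecMulVec_apply] using congrFun (congrFun h 0) 0
    subst hF
    refine Riter_succ_ne_top (a := ![1, 0]) (b := ![1, 0, 0]) (t := 1)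
      (Riter_one_ne_top hfin (by rwa [zero_add, one_smul]))
      (Riter_one_ne_top hfin (by rwa [zero_sub, one_smul, neg_ne_zero]))
  · exact ne_top_of_le_ne_top (Riter_one_ne_top hfin hF) (Riter_succ_le f 1 F)

theorem Riter_ne_top (hfin : ∀ F, colCross F ≠ 0 → f F ≠ ⊤) {i : ℕ} (hi : 2 ≤ i) (F : 𝕄) :
    Riter f i F ≠ ⊤ :=
  ne_top_of_le_ne_top (Riter_two_ne_top hfin F) (Riter_antitone f F hi)

end Riter

section Envelope

variable (f : 𝕄 → ℝ≥0∞)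

theorem le_Riter {g : 𝕄 → ℝ≥0∞} (hg : RankOneConvex g) (hgf : g ≤ f) : ∀ i, g ≤ Riter f i
  | 0 => hgf
  | i + 1 => fun F => by
    rw [Riter_succ_eq]
    refine le_iInf₂ fun a b => le_iInf₂ fun l hl => (hg.le_laminateAvg a b F hl).trans ?_
    exact add_le_add (mul_le_mul_right (le_Riter hg hgf i _) _)
      (mul_le_mul_right (le_Riter hg hgf i _) _)

theorem rankOneConvex_iInf_Riter : RankOneConvex fun F => ⨅ i, Riter f i F := by
  intro l hl A B hrank
  obtain ⟨b, a, hAB⟩ := exists_eq_vecMulVec_of_rank_eq_one hrank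
  set F := l • A + (1 - l) • B
  have hstep (i : ℕ) : Riter f (i + 1) F ≤
      ENNReal.ofReal l * Riter f i A + ENNReal.ofReal (1 - l) * Riter f i B := by
    have h := Riter_succ_le_laminateAvg f (i := i) (F := F) a b (l := 1 - l)
      ⟨by linarith [hl.2], by linarith [hl.1]⟩
    rwa [laminateAvg, sub_sub_cancel, ← hAB, show F + (1 - l) • (A - B) = A by module,
      show F - l • (A - B) = B by module] at h
  have hdir : ∀ i j : ℕ, ∃ k,
      ENNReal.ofReal l * Riter f k A + ENNReal.ofReal (1 - l) * Riter f k B ≤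
        ENNReal.ofReal l * Riter f i A + ENNReal.ofReal (1 - l) * Riter f j B := fun i j =>
    ⟨max i j, add_le_add (mul_le_mul_right (Riter_antitone f A (le_max_left i j)) _)
      (mul_le_mul_right (Riter_antitone f B (le_max_right i j)) _)⟩
  calc ⨅ i, Riter f i F
      ≤ ⨅ i, (ENNReal.ofReal l * Riter f i A + ENNReal.ofReal (1 - l) * Riter f i B) :=
        le_iInf fun i => (iInf_le _ (i + 1)).trans (hstep i)
    _ = ENNReal.ofReal l * (⨅ i, Riter f i A) + ENNReal.ofReal (1 - l) * ⨅ i, Riter f i B := by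
        rw [← ENNReal.iInf_add_iInf hdir, ENNReal.mul_iInf' (by simp) (fun _ => ⟨0⟩),
          ENNReal.mul_iInf' (by simp) (fun _ => ⟨0⟩)]

theorem rcEnv_eq_iInf_Riter (F : 𝕄) : rcEnv f F = ⨅ i, Riter f i F :=
  le_antisymm (iSup₂_le fun _ hg => le_iInf fun i => le_Riter f hg.1 hg.2 i F)
    (le_iSup₂_of_le _ ⟨rankOneConvex_iInf_Riter f, fun _ => iInf_le _ 0⟩ le_rfl)

end Envelope

theorem stmt13_general (W₀ : Matrix (Fin 3) (Fin 2) ℝ → ℝ≥0∞)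
    (hcont : Continuous W₀)
    (htop : ∀ F, W₀ F = ⊤ ↔ colCross F = 0) :
    (∀ i : ℕ, UpperSemicontinuous (Riter W₀ i)) ∧
    (∀ i : ℕ, 2 ≤ i → ∀ F, Riter W₀ i F ≠ ⊤) ∧
    (∀ i : ℕ, ∀ F, Riter W₀ (i + 1) F ≤ Riter W₀ i F) ∧
    (∀ F, rcEnv W₀ F = ⨅ i : ℕ, Riter W₀ i F) :=
  ⟨Riter_upperSemicontinuous hcont.upperSemicontinuous,
    fun _ => Riter_ne_top fun F h => mt (htop F).1 h, Riter_succ_le W₀,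
    rcEnv_eq_iInf_Riter W₀⟩

/-- properties of the Kohn–Strang iteration: each `R_iW₀` is upper
semicontinuous, `R_iW₀` is finite-valued for `i ≥ 2`, the sequence is pointwise
nonincreasing, and its pointwise infimum is the rank-one convex envelope `RW₀`. -/
theorem stmt13 (p : ℝ) (hp : 1 < p) (W₀ : Matrix (Fin 3) (Fin 2) ℝ → ℝ≥0∞)
    (C₁ : ℝ) (hC₁ : 0 < C₁)
    (hcont : Continuous W₀)
    (hcoer : ∀ F, ENNReal.ofReal (C₁ * frob F ^ p - C₁⁻¹) ≤ W₀ F)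
    (htop : ∀ F, W₀ F = ⊤ ↔ colCross F = 0)
    (hgrowth : ∀ δ : ℝ, 0 < δ → ∃ c : ℝ, 0 < c ∧ ∀ F,
      δ ≤ enorm3 (colCross F) → W₀ F ≤ ENNReal.ofReal (c * (1 + frob F ^ p))) :
    (∀ i : ℕ, UpperSemicontinuous (Riter W₀ i)) ∧
    (∀ i : ℕ, 2 ≤ i → ∀ F, Riter W₀ i F ≠ ⊤) ∧
    (∀ i : ℕ, ∀ F, Riter W₀ (i + 1) F ≤ Riter W₀ i F) ∧
    (∀ F, rcEnv W₀ F = ⨅ i : ℕ, Riter W₀ i F) :=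
  stmt13_general W₀ hcont htop
end
end
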